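/- For every positive integer n, the two expressions for the binomial Eulerian polynomial agree: 1 + t·Σ_{m=1}^n C(n,m) A_m(t) = Σ_{m=0}^n C(n,m) t^{n−m} A_m(t), where A_m(t) is the Eulerian polynomial of the symmetric group S_m and A_0(t) := 1. -/

import Mathlib

/-!
Inserting the largest letter into the `m + 1` gaps of a permutation of `[m]` keeps the number of
descents exactly when the gap is a descent or the last gap, which gives the Eulerian recurrence
`A_{m+1} = (1 + m t) A_m + t (1 - t) A_m'`.  The binomial transform
`E_n = Σ_m C(n,m) (t - 1)^(n-m) A_m` inherits it as
`E_{n+1} = (t - 1) E_n + (1 + n t) E_n + t (1 - t) E_n'`, and comparing the two recurrences gives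
`E_n = t A_n` for `n ≥ 1`.  Finally, binomial transforms compose, `t = (t - 1) + 1`, so
`Σ_m C(n,m) t^(n-m) A_m = Σ_k C(n,k) E_k = 1 + t Σ_{k ≥ 1} C(n,k) A_k`.
-/

open Polynomial Finset

/-- The value of the permutation `w` of `[m] = {1,…,m}` at the (1-based) position `k`,
with the convention that positions outside `[1,m]` take the value `m+1`. -/
def pVal {m : ℕ} (w : Equiv.Perm (Fin m)) (k : ℕ) : ℕ :=
  if h : 1 ≤ k ∧ k ≤ m then (w ⟨k - 1, by omega⟩ : ℕ) + 1 else m + 1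

/-- The descent set of a permutation `w` of `[m]`: the set of `i ∈ [m−1]` with
`w(i) > w(i+1)`. -/
def pDesSet {m : ℕ} (w : Equiv.Perm (Fin m)) : Finset ℕ :=
  (Finset.Icc 1 (m - 1)).filter fun i => pVal w (i + 1) < pVal w i

/-- The Eulerian polynomial `A_m(t) = Σ_{w ∈ S_m} t^{des(w)}` (with `A_0(t) = 1`). -/
noncomputable def eulerianPoly (m : ℕ) : ℤ[X] :=
  ∑ w : Equiv.Perm (Fin m), X ^ (pDesSet w).card

section BinomialTransform

variable {R : Type*} [CommSemiring R]

def binomialTransform (y : R) (a : ℕ → R) (n : ℕ) : R :=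
  ∑ m ∈ range (n + 1), (n.choose m : R) * y ^ (n - m) * a m

theorem binomialTransform_zero (y : R) (a : ℕ → R) : binomialTransform y a 0 = a 0 := by
  simp [binomialTransform]

theorem binomialTransform_succ (y : R) (a : ℕ → R) (n : ℕ) :
    binomialTransform y a (n + 1) =
      y * binomialTransform y a n + binomialTransform y (fun m => a (m + 1)) n := by
  have hsplit := sum_choose_succ_mul (fun m j => y ^ j * a m) n
  simp only [← mul_assoc] at hsplit
  rw [binomialTransform, hsplit, binomialTransform, binomialTransform, mul_sum]
  congr 1
  refine sum_congr rfl fun m hm => ?_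
  rw [Nat.sub_add_comm (Nat.lt_succ_iff.mp (mem_range.mp hm)), pow_succ]
  ring

theorem binomialTransform_mul_add (y c : R) (a b : ℕ → R) (n : ℕ) :
    binomialTransform y (fun m => c * a m + b m) n =
      c * binomialTransform y a n + binomialTransform y b n := by
  simp only [binomialTransform, mul_sum, ← sum_add_distrib]
  exact sum_congr rfl fun m _ => by ring

theorem binomialTransform_binomialTransform (y z : R) (a : ℕ → R) (n : ℕ) :
    binomialTransform z (binomialTransform y a) n = binomialTransform (y + z) a n := by
  induction n generalizing a with
  | zero => simp [binomialTransform_zero]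
  | succ n ih =>
    have hshift : (fun m => binomialTransform y a (m + 1)) =
        fun m => y * binomialTransform y a m + binomialTransform y (fun k => a (k + 1)) m :=
      funext (binomialTransform_succ y a)
    rw [binomialTransform_succ, hshift, binomialTransform_mul_add, ih, ih,
      binomialTransform_succ]
    ring

end BinomialTransform

section EulerianStep

variable {R : Type*} [CommRing R]

noncomputable def eulerianStep (k : ℕ) : R[X] →ₗ[R] R[X] :=
  LinearMap.mulLeft R (1 + (k : R[X]) * X) + LinearMap.mulLeft R (X * (1 - X)) ∘ₗ derivative

@[simp]
theorem eulerianStep_apply (k : ℕ) (p : R[X]) :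
    eulerianStep k p = (1 + (k : R[X]) * X) * p + X * (1 - X) * derivative p :=
  rfl

theorem eulerianStep_X_pow {d k : ℕ} (hd : d ≤ k) :
    eulerianStep k (X ^ d : R[X]) = (d + 1) • X ^ d + (k - d) • X ^ (d + 1) := by
  rcases d with _ | d
  · simp
  · rw [eulerianStep_apply, derivative_X_pow, nsmul_eq_mul, nsmul_eq_mul, Nat.cast_sub hd,
      C_eq_natCast, Nat.add_sub_cancel]
    push_cast
    ring

theorem X_sub_one_pow_mul_eulerianStep (i j : ℕ) (p : R[X]) :
    (X - 1) ^ j * eulerianStep i p = eulerianStep (i + j) ((X - 1) ^ j * p) := by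
  rcases j with _ | j
  · simp
  -- `X * (1 - X) * derivative ((X - 1) ^ j) = - j * X * (X - 1) ^ j`
  · simp only [eulerianStep_apply, derivative_mul, derivative_pow, derivative_sub, derivative_X,
      derivative_one, C_eq_natCast, Nat.add_sub_cancel]
    push_cast
    ring

theorem eulerianStep_X_mul (k : ℕ) (p : R[X]) :
    eulerianStep k (X * p) = X * eulerianStep k p + X * (1 - X) * p := by
  simp only [eulerianStep_apply, derivative_mul, derivative_X]
  ring

theorem binomialTransform_X_sub_one_succ {a : ℕ → R[X]}
    (ha : ∀ m, a (m + 1) = eulerianStep m (a m)) (n : ℕ) :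
    binomialTransform (X - 1) a (n + 1) =
      (X - 1) * binomialTransform (X - 1) a n + eulerianStep n (binomialTransform (X - 1) a n) := by
  rw [binomialTransform_succ]
  congr 1
  simp only [binomialTransform, ha, map_sum]
  refine sum_congr rfl fun m hm => ?_
  have hmn : m + (n - m) = n := Nat.add_sub_cancel' (Nat.lt_succ_iff.mp (mem_range.mp hm))
  rw [mul_assoc, mul_assoc, ← nsmul_eq_mul, ← nsmul_eq_mul, map_nsmul,
    X_sub_one_pow_mul_eulerianStep, hmn]

theorem binomialTransform_X_sub_one_eq_X_mul {a : ℕ → R[X]} (h0 : a 0 = 1)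
    (ha : ∀ m, a (m + 1) = eulerianStep m (a m)) (n : ℕ) :
    binomialTransform (X - 1) a (n + 1) = X * a (n + 1) := by
  induction n with
  | zero =>
    rw [binomialTransform_X_sub_one_succ ha, binomialTransform_zero, ha, h0]
    simp
  | succ n ih =>
    rw [binomialTransform_X_sub_one_succ ha, ih, eulerianStep_X_mul, ha (n + 1)]
    ring

end EulerianStep

def descents (f : ℕ → ℕ) (N : ℕ) : Finset ℕ :=
  (Icc 1 (N - 1)).filter fun i => f (i + 1) < f i

theorem mem_descents {f : ℕ → ℕ} {N i : ℕ} :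
    i ∈ descents f N ↔ 1 ≤ i ∧ i + 1 ≤ N ∧ f (i + 1) < f i := by
  simp only [descents, mem_filter, mem_Icc, and_assoc]
  constructor <;> rintro ⟨h1, h2, h3⟩ <;> exact ⟨h1, by omega, h3⟩

theorem card_descents_le (f : ℕ → ℕ) (N : ℕ) : #(descents f N) ≤ N :=
  (card_filter_le _ _).trans (by simp)

theorem descents_congr {f f' : ℕ → ℕ} {N : ℕ} (h : ∀ i ∈ Icc 1 N, f i = f' i) :
    descents f N = descents f' N := by
  refine filter_congr fun i hi => ?_
  rw [mem_Icc] at hi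
  rw [h i (mem_Icc.mpr ⟨hi.1, by omega⟩), h (i + 1) (mem_Icc.mpr ⟨by omega, by omega⟩)]

def insertAfter (f : ℕ → ℕ) (g M : ℕ) (i : ℕ) : ℕ :=
  if i ≤ g then f i else if i = g + 1 then M else f (i - 1)

theorem descents_insertAfter {f : ℕ → ℕ} {g N M : ℕ} (hg : g ≤ N)
    (hM : ∀ i ∈ Icc 1 N, f i < M) :
    descents (insertAfter f g M) (N + 1) =
      ((descents f N).erase g).image (fun i => if i < g then i else i + 1) ∪
        (if g < N then {g + 1} else ∅) := by
  have hMg : 1 ≤ g → f g < M := fun h => hM g (mem_Icc.mpr ⟨h, hg⟩)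
  have hMg' : g < N → f (g + 1) < M := fun h => hM (g + 1) (mem_Icc.mpr ⟨by omega, h⟩)
  have hshift : ∀ a i, (if a < g then a else a + 1) = i ↔
      i ≠ g ∧ a = if i < g then i else i - 1 := by
    intro a i; split_ifs <;> omega
  ext i
  simp only [mem_union, mem_image, mem_erase, mem_descents, hshift, exists_eq_right_right]
  unfold insertAfter
  rcases lt_trichotomy i g with hig | rfl | hgi
  · split_ifs <;> simp <;> omega
  · split_ifs <;> simp <;> omega
  · have hi : i - 1 + 1 = i := by omega
    split_ifs <;> simp_all <;> omega

theorem card_descents_insertAfter {f : ℕ → ℕ} {g N M : ℕ} (hg : g ≤ N)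
    (hM : ∀ i ∈ Icc 1 N, f i < M) :
    #(descents (insertAfter f g M) (N + 1)) =
      #(descents f N) + if g ∈ insert N (descents f N) then 0 else 1 := by
  have hdisj : Disjoint (((descents f N).erase g).image fun i => if i < g then i else i + 1)
      (if g < N then {g + 1} else ∅) := by
    split_ifs
    · simp only [disjoint_singleton_right, mem_image, mem_erase, not_exists, not_and]
      intro a hag
      split_ifs <;> omega
    · exact disjoint_empty_right _
  have hinj : Function.Injective fun i => if i < g then i else i + 1 := by
    intro a b hab
    dsimp only at hab
    split_ifs at hab <;> omega
  rw [descents_insertAfter hg hM, card_union_of_disjoint hdisj, card_image_of_injective _ hinj]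
  by_cases hgD : g ∈ descents f N
  · have hgN : g < N := by rw [mem_descents] at hgD; omega
    rw [card_erase_of_mem hgD, if_pos hgN, if_pos (mem_insert_of_mem hgD), card_singleton]
    have := card_pos.mpr ⟨g, hgD⟩
    omega
  · simp only [erase_eq_of_notMem hgD, mem_insert, or_iff_left hgD]
    split_ifs <;> simp only [card_singleton, card_empty] <;> omega

theorem sum_pow_card_descents_insertAfter {R : Type*} [CommSemiring R] (x : R) {f : ℕ → ℕ}
    {N M : ℕ} (hM : ∀ i ∈ Icc 1 N, f i < M) :
    ∑ g ∈ range (N + 1), x ^ #(descents (insertAfter f g M) (N + 1)) =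
      (#(descents f N) + 1) • x ^ #(descents f N) +
        (N - #(descents f N)) • x ^ (#(descents f N) + 1) := by
  set K := insert N (descents f N)
  have hK : K ⊆ range (N + 1) := by
    intro i hi
    rw [mem_insert, mem_descents] at hi
    rw [mem_range]
    omega
  have hcardK : #K = #(descents f N) + 1 :=
    card_insert_of_notMem fun h => by rw [mem_descents] at h; omega
  have hsum : ∀ g ∈ range (N + 1), x ^ #(descents (insertAfter f g M) (N + 1)) =
      if g ∈ K then x ^ #(descents f N) else x ^ (#(descents f N) + 1) := by
    intro g hg
    rw [card_descents_insertAfter (Nat.lt_succ_iff.mp (mem_range.mp hg)) hM]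
    split_ifs <;> rfl
  rw [sum_congr rfl hsum, sum_ite, sum_const, sum_const, filter_mem_eq_inter,
    inter_eq_right.mpr hK, filter_notMem_eq_sdiff, card_sdiff_of_subset hK, hcardK, card_range]
  congr 2
  omega

section InsertMax

variable {m : ℕ}

def insertMax (w : Equiv.Perm (Fin m)) (p : Fin (m + 1)) : Equiv.Perm (Fin (m + 1)) :=
  (finSuccEquiv' p).trans ((Equiv.optionCongr w).trans finSuccEquivLast.symm)

@[simp]
theorem insertMax_apply_self (w : Equiv.Perm (Fin m)) (p : Fin (m + 1)) :
    insertMax w p p = Fin.last m := by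
  simp [insertMax, finSuccEquiv'_at]

@[simp]
theorem insertMax_apply_succAbove (w : Equiv.Perm (Fin m)) (p : Fin (m + 1)) (j : Fin m) :
    insertMax w p (p.succAbove j) = (w j).castSucc := by
  simp [insertMax, finSuccEquiv'_succAbove]

theorem insertMax_bijective :
    Function.Bijective fun wp : Equiv.Perm (Fin m) × Fin (m + 1) => insertMax wp.1 wp.2 := by
  rw [Fintype.bijective_iff_injective_and_card]
  refine ⟨fun ⟨w, p⟩ ⟨w', p'⟩ h => ?_, ?_⟩
  · dsimp only at h
    obtain rfl : p = p' :=
      (insertMax w p).injective (by rw [insertMax_apply_self, h, insertMax_apply_self])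
    obtain rfl : w = w' := Equiv.ext fun j => Fin.castSucc_injective _ <| by
      rw [← insertMax_apply_succAbove, ← insertMax_apply_succAbove, h]
    rfl
  · simp [Fintype.card_perm, Nat.factorial_succ, mul_comm]

theorem pVal_succ (w : Equiv.Perm (Fin m)) (j : Fin m) : pVal w (j + 1) = w j + 1 := by
  rw [pVal, dif_pos ⟨by omega, j.is_lt⟩]
  rfl

theorem pVal_lt (w : Equiv.Perm (Fin m)) {i : ℕ} (hi : i ∈ Icc 1 m) : pVal w i < m + 1 := by
  obtain ⟨j, rfl⟩ : ∃ j : Fin m, (j : ℕ) + 1 = i := ⟨⟨i - 1, by grind⟩, by grind⟩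
  rw [pVal_succ]
  exact Nat.succ_lt_succ (w j).is_lt

theorem pVal_insertMax (w : Equiv.Perm (Fin m)) (p j : Fin (m + 1)) :
    pVal (insertMax w p) (j + 1) = insertAfter (pVal w) p (m + 1) (j + 1) := by
  by_cases hjp : j = p
  · subst hjp
    simp [pVal_succ, insertAfter]
  obtain ⟨z, rfl⟩ := Fin.exists_succAbove_eq hjp
  rw [pVal_succ, insertMax_apply_succAbove, Fin.val_castSucc, insertAfter]
  by_cases hz : z.castSucc < p
  · rw [Fin.succAbove_of_castSucc_lt _ _ hz, Fin.val_castSucc,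
      if_pos (by simpa [Fin.lt_def] using hz), pVal_succ]
  · rw [Fin.succAbove_of_le_castSucc _ _ (not_lt.mp hz), Fin.val_succ]
    rw [Fin.lt_def, Fin.val_castSucc, not_lt] at hz
    rw [if_neg (by omega), if_neg (by omega), Nat.add_sub_cancel, pVal_succ]

theorem pDesSet_eq_descents (w : Equiv.Perm (Fin m)) : pDesSet w = descents (pVal w) m :=
  rfl

theorem pDesSet_insertMax (w : Equiv.Perm (Fin m)) (p : Fin (m + 1)) :
    pDesSet (insertMax w p) = descents (insertAfter (pVal w) p (m + 1)) (m + 1) :=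
  descents_congr fun i hi => by
    obtain ⟨j, rfl⟩ : ∃ j : Fin (m + 1), (j : ℕ) + 1 = i :=
      ⟨⟨i - 1, by grind⟩, by grind⟩
    exact pVal_insertMax w p j

end InsertMax

theorem eulerianPoly_zero : eulerianPoly 0 = 1 := by
  simp [eulerianPoly, pDesSet]

theorem eulerianPoly_succ (m : ℕ) : eulerianPoly (m + 1) = eulerianStep m (eulerianPoly m) := by
  rw [eulerianPoly, ← Fintype.sum_bijective _ insertMax_bijective _ _ fun _ => rfl,
    Fintype.sum_prod_type, eulerianPoly, map_sum]
  refine sum_congr rfl fun w _ => ?_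
  rw [pDesSet_eq_descents, eulerianStep_X_pow (card_descents_le _ _),
    ← sum_pow_card_descents_insertAfter _ fun _ => pVal_lt w]
  simp only [pDesSet_insertMax]
  exact Fin.sum_univ_eq_sum_range
    (fun g => (X : ℤ[X]) ^ #(descents (insertAfter (pVal w) g (m + 1)) (m + 1))) (m + 1)

theorem binomEulerian_two_defs_general (n : ℕ) :
    1 + X * ∑ m ∈ Icc 1 n, (n.choose m : ℤ[X]) * eulerianPoly m =
      ∑ m ∈ range (n + 1), (n.choose m : ℤ[X]) * X ^ (n - m) * eulerianPoly m := by
  have hE (k : ℕ) : binomialTransform (X - 1) eulerianPoly (k + 1) = X * eulerianPoly (k + 1) :=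
    binomialTransform_X_sub_one_eq_X_mul eulerianPoly_zero eulerianPoly_succ k
  calc 1 + X * ∑ m ∈ Icc 1 n, (n.choose m : ℤ[X]) * eulerianPoly m
      = ∑ k ∈ range (n + 1), (n.choose k : ℤ[X]) * 1 ^ (n - k) *
          binomialTransform (X - 1) eulerianPoly k := by
        rw [range_eq_Ico, sum_eq_sum_Ico_succ_bot (by omega : 0 < n + 1), zero_add,
          Ico_add_one_right_eq_Icc, mul_sum]
        refine congrArg₂ _ (by simp [binomialTransform_zero, eulerianPoly_zero])
          (sum_congr rfl fun k hk => ?_)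
        obtain ⟨k, rfl⟩ : ∃ j, j + 1 = k := ⟨k - 1, by grind⟩
        rw [hE]
        ring
    _ = binomialTransform X eulerianPoly n := by
        rw [← binomialTransform, binomialTransform_binomialTransform, sub_add_cancel]

/-- For every positive integer `n`, the two expressions for the binomial
Eulerian polynomial agree:
`1 + t·Σ_{m=1}^n C(n,m) A_m(t) = Σ_{m=0}^n C(n,m) t^{n−m} A_m(t)`. -/
theorem binomEulerian_two_defs (n : ℕ) (hn : 1 ≤ n) :
    1 + X * ∑ m ∈ Icc 1 n, (n.choose m : ℤ[X]) * eulerianPoly m =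
      ∑ m ∈ range (n + 1), (n.choose m : ℤ[X]) * X ^ (n - m) * eulerianPoly m :=
  binomEulerian_two_defs_general n
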